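/- arXiv:math/0206118 — 2 statements merged into one kernel-verified Lean document; each statement's English description precedes it below -/
import Mathlib

section
/- Let w, w' be vectors in ℝ² making an angle exactly θ ∈ (0, π/2) with each other, and let θ₀ ∈ [0,π] satisfy θ + θ₀ ≤ π. Then (cos θ₀)·‖w'‖ ≤ ‖w − w'‖ + cos(θ + θ₀)·‖w‖. -/
/-- If `w, w' ∈ ℝ²` make angle exactly `θ ∈ (0, π/2)` (vacuous if one is zero) and
`θ₀ ∈ [0,π]` with `θ + θ₀ ≤ π`, then `cos θ₀ ‖w'‖ ≤ ‖w − w'‖ + cos(θ+θ₀) ‖w‖`. -/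
theorem stmt_8 (w w' : EuclideanSpace ℝ (Fin 2)) (θ θ₀ : ℝ)
    (hθ : θ ∈ Set.Ioo 0 (Real.pi / 2)) (hθ₀ : θ₀ ∈ Set.Icc 0 Real.pi)
    (hsum : θ + θ₀ ≤ Real.pi)
    (hangle : w ≠ 0 → w' ≠ 0 → InnerProductGeometry.angle w w' = θ) :
    Real.cos θ₀ * ‖w'‖ ≤ ‖w - w'‖ + Real.cos (θ + θ₀) * ‖w‖ := by
  set a := ‖w‖ with ha
  set b := ‖w'‖ with hb
  have hinner : (inner ℝ w w' : ℝ) = Real.cos θ * a * b := by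
    by_cases hw : w = 0
    · simp [hw, ha, hb]
    by_cases hw' : w' = 0
    · simp [hw', ha, hb]
    have := InnerProductGeometry.cos_angle_mul_norm_mul_norm w w'
    rw [hangle hw hw'] at this
    rw [← this]; ring
  have hn : ‖w - w'‖ ^ 2 = a ^ 2 + b ^ 2 - 2 * (Real.cos θ * a * b) := by
    rw [@norm_sub_sq_real, hinner]; ring
  have hnn : (0:ℝ) ≤ ‖w - w'‖ := norm_nonneg _
  have hcos : Real.cos θ = Real.cos (θ + θ₀) * Real.cos θ₀ +
      Real.sin (θ + θ₀) * Real.sin θ₀ := by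
    have h := Real.cos_sub (θ + θ₀) θ₀
    rw [show θ + θ₀ - θ₀ = θ from by ring] at h
    exact h
  rw [hcos] at hn
  have h1 := Real.sin_sq_add_cos_sq (θ + θ₀)
  have h2 := Real.sin_sq_add_cos_sq θ₀
  nlinarith [sq_nonneg (a * Real.sin (θ + θ₀) - b * Real.sin θ₀),
    sq_nonneg (‖w - w'‖ + (Real.cos θ₀ * b - Real.cos (θ + θ₀) * a)),
    sq_nonneg (‖w - w'‖ - (Real.cos θ₀ * b - Real.cos (θ + θ₀) * a))]
end

section
/- Let κ > 0, α ∈ ℝ with |α| ≤ κ, write α = κ·cos θ₀ with θ₀ ∈ [0,π], let θ ∈ (0, π/2), and set β₀ = κ·cos(θ+θ₀) if θ+θ₀ ≤ π and β₀ = −κ otherwise. Let Γ, Γ' ⊂ ℝ² be cones (closed under positive scalar multiplication) such that the angle between any nonzero w ∈ Γ and nonzero w' ∈ Γ' is at least θ. Then for all w ∈ Γ, w' ∈ Γ': α·‖w'‖ − κ·‖w − w'‖ − β₀·‖w‖ ≤ 0. -/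
/-- Dissipative propagation estimate: if `|α| ≤ κ`, `α = κ cos θ₀`, and `Γ, Γ'` are
cones in `ℝ²` whose nonzero vectors make angle at least `θ ∈ (0,π/2)` with each other,
then with `β₀ = κ cos(θ+θ₀)` (resp. `−κ` if `θ+θ₀ > π`),
`α‖w'‖ − κ‖w−w'‖ − β₀‖w‖ ≤ 0` for all `w ∈ Γ`, `w' ∈ Γ'`. -/
theorem stmt_12 (κ α θ θ₀ β₀ : ℝ) (hκ : 0 < κ) (hα : |α| ≤ κ)
    (hθ₀ : θ₀ ∈ Set.Icc 0 Real.pi) (hαθ₀ : α = κ * Real.cos θ₀)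
    (hθ : θ ∈ Set.Ioo 0 (Real.pi / 2))
    (hβ₀ : β₀ = if θ + θ₀ ≤ Real.pi then κ * Real.cos (θ + θ₀) else -κ)
    (Γ Γ' : Set (EuclideanSpace ℝ (Fin 2)))
    (hΓ : ∀ c : ℝ, 0 < c → ∀ w ∈ Γ, c • w ∈ Γ)
    (hΓ' : ∀ c : ℝ, 0 < c → ∀ w ∈ Γ', c • w ∈ Γ')
    (hangle : ∀ w ∈ Γ, ∀ w' ∈ Γ', w ≠ 0 → w' ≠ 0 →
      θ ≤ InnerProductGeometry.angle w w') :
    ∀ w ∈ Γ, ∀ w' ∈ Γ', α * ‖w'‖ - κ * ‖w - w'‖ - β₀ * ‖w‖ ≤ 0 := by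
  have hαbd := abs_le.mp hα
  have hβbd : -κ ≤ β₀ ∧ β₀ ≤ κ := by
    rw [hβ₀]; split
    · constructor <;>
        nlinarith [Real.neg_one_le_cos (θ + θ₀), Real.cos_le_one (θ + θ₀)]
    · constructor <;> linarith
  intro w hw w' hw'
  rcases eq_or_ne w' 0 with h' | h'
  · subst h'
    simp only [norm_zero, mul_zero, sub_zero]
    nlinarith [norm_nonneg w, hβbd.1]
  rcases eq_or_ne w 0 with h | h
  · subst h
    rw [zero_sub, norm_neg, norm_zero]
    nlinarith [norm_nonneg w', hαbd.2]
  -- main case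
  have ha : 0 < ‖w‖ := norm_pos_iff.mpr h
  have hb : 0 < ‖w'‖ := norm_pos_iff.mpr h'
  have hc : 0 ≤ ‖w - w'‖ := norm_nonneg (w - w')
  have hφθ : θ ≤ InnerProductGeometry.angle w w' := hangle w hw w' hw' h h'
  have hφπ : InnerProductGeometry.angle w w' ≤ Real.pi :=
    InnerProductGeometry.angle_le_pi w w'
  have hcos : Real.cos (InnerProductGeometry.angle w w') ≤ Real.cos θ :=
    Real.cos_le_cos_of_nonneg_of_le_pi hθ.1.le hφπ hφθ
  have hinner : (inner ℝ w w' : ℝ) =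
      ‖w‖ * ‖w'‖ * Real.cos (InnerProductGeometry.angle w w') := by
    have hmm := InnerProductGeometry.cos_angle_mul_norm_mul_norm w w'
    rw [← hmm]; ring
  have hc2 : ‖w - w'‖ ^ 2 = ‖w‖ ^ 2 -
      2 * (‖w‖ * ‖w'‖ * Real.cos (InnerProductGeometry.angle w w')) + ‖w'‖ ^ 2 := by
    rw [← hinner]
    exact norm_sub_sq_real w w'
  set a := ‖w‖ with hadef
  set b := ‖w'‖ with hbdef
  set c := ‖w - w'‖ with hcdef
  have hkey : a ^ 2 + b ^ 2 - 2 * a * b * Real.cos θ ≤ c ^ 2 := by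
    nlinarith [mul_pos ha hb, hcos]
  subst hαθ₀
  -- squared estimate
  have hsq : (κ * Real.cos θ₀ * b - β₀ * a) ^ 2 ≤
      κ ^ 2 * (a ^ 2 + b ^ 2 - 2 * a * b * Real.cos θ) := by
    rw [hβ₀]
    split_ifs with hcase
    · have hpy1 := Real.sin_sq_add_cos_sq θ₀
      have hpy2 := Real.sin_sq_add_cos_sq (θ + θ₀)
      have hcadd : Real.cos θ = Real.cos (θ + θ₀) * Real.cos θ₀ +
          Real.sin (θ + θ₀) * Real.sin θ₀ := by
        have hh := Real.cos_sub (θ + θ₀) θ₀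
        rwa [add_sub_cancel_right] at hh
      have hinq : (Real.cos θ₀ * b - Real.cos (θ + θ₀) * a) ^ 2 ≤
          a ^ 2 + b ^ 2 - 2 * a * b * Real.cos θ := by
        have hid : a ^ 2 + b ^ 2 - 2 * a * b * Real.cos θ -
            (Real.cos θ₀ * b - Real.cos (θ + θ₀) * a) ^ 2 =
            (a * Real.sin (θ + θ₀) - b * Real.sin θ₀) ^ 2 := by
          rw [hcadd]
          linear_combination -(a ^ 2 * hpy2) - b ^ 2 * hpy1
        nlinarith [sq_nonneg (a * Real.sin (θ + θ₀) - b * Real.sin θ₀)]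
      calc (κ * Real.cos θ₀ * b - κ * Real.cos (θ + θ₀) * a) ^ 2
          = κ ^ 2 * (Real.cos θ₀ * b - Real.cos (θ + θ₀) * a) ^ 2 := by ring
        _ ≤ κ ^ 2 * (a ^ 2 + b ^ 2 - 2 * a * b * Real.cos θ) :=
            mul_le_mul_of_nonneg_left hinq (sq_nonneg κ)
    · push_neg at hcase
      have h1 : Real.cos θ ≤ Real.cos (Real.pi - θ₀) :=
        Real.cos_le_cos_of_nonneg_of_le_pi (by linarith [hθ₀.2])
          (by linarith [hθ.2, Real.pi_pos]) (by linarith)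
      rw [Real.cos_pi_sub] at h1
      have hpy1 := Real.sin_sq_add_cos_sq θ₀
      have hinq : (Real.cos θ₀ * b + a) ^ 2 ≤
          a ^ 2 + b ^ 2 - 2 * a * b * Real.cos θ := by
        nlinarith [mul_pos ha hb, sq_nonneg (b * Real.sin θ₀)]
      calc (κ * Real.cos θ₀ * b - -κ * a) ^ 2
          = κ ^ 2 * (Real.cos θ₀ * b + a) ^ 2 := by ring
        _ ≤ κ ^ 2 * (a ^ 2 + b ^ 2 - 2 * a * b * Real.cos θ) :=
            mul_le_mul_of_nonneg_left hinq (sq_nonneg κ)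
  have hsq2 : (κ * Real.cos θ₀ * b - β₀ * a) ^ 2 ≤ (κ * c) ^ 2 := by
    calc (κ * Real.cos θ₀ * b - β₀ * a) ^ 2
        ≤ κ ^ 2 * (a ^ 2 + b ^ 2 - 2 * a * b * Real.cos θ) := hsq
      _ ≤ κ ^ 2 * c ^ 2 := mul_le_mul_of_nonneg_left hkey (sq_nonneg κ)
      _ = (κ * c) ^ 2 := by ring
  have hfin : κ * Real.cos θ₀ * b - β₀ * a ≤ κ * c :=
    le_of_sq_le_sq hsq2 (mul_nonneg hκ.le hc)
  linarith
end
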